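/- Let S ~ Bernoulli(θ) and let X₁,...,X_N be outputs of N independent binary symmetric channels with crossover probability a₁ ∈ [0,1/2] and common input S. If S achieves the common information of every pair (i.e., C(Xₖ,Xⱼ) = I(Xₖ,Xⱼ;S) for all k≠j), then C(X₁,...,X_N) = I(X₁,...,X_N;S). -/

import Mathlib

open scoped BigOperators

/-- Shannon entropy of a pmf on a finite alphabet (natural log). -/
noncomputable def ent {A : Type*} [Fintype A] (p : A → ℝ) : ℝ :=
  -∑ a, p a * Real.log (p a)

/-- `p` is a probability mass function. -/
def IsPMF {A : Type*} [Fintype A] (p : A → ℝ) : Prop :=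
  (∀ a, 0 ≤ p a) ∧ ∑ a, p a = 1

/-- Wyner's common information of a finite collection of random variables with
joint pmf `p`: the infimum of `I(X;W)` over auxiliary variables `W` (on finite
alphabets) rendering the coordinates mutually conditionally independent. -/
noncomputable def wynerCI {ι : Type} [Fintype ι] [DecidableEq ι]
    {𝒳 : ι → Type} [∀ i, Fintype (𝒳 i)] [∀ i, DecidableEq (𝒳 i)]
    (p : (∀ i, 𝒳 i) → ℝ) : ℝ :=
  sInf {r : ℝ | ∃ n : ℕ, ∃ q : (∀ i, 𝒳 i) × Fin n → ℝ, IsPMF q ∧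
    (∀ x, (∑ w, q (x, w)) = p x) ∧
    (∀ x w, q (x, w) * (∑ y, q (y, w)) ^ (Fintype.card ι - 1)
        = ∏ i, (∑ y : ∀ i, 𝒳 i, if y i = x i then q (y, w) else 0)) ∧
    r = ent (fun x : ∀ i, 𝒳 i => ∑ w, q (x, w))
        + ent (fun w => ∑ x : ∀ i, 𝒳 i, q (x, w)) - ent q}

/-- BSC transition probability. -/
noncomputable def bsc (a : ℝ) (s x : Bool) : ℝ := if x = s then 1 - a else a

/-- Input pmf: `P(S = true) = θ`. -/
noncomputable def pS (θ : ℝ) (s : Bool) : ℝ := if s then θ else 1 - θ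

/-- Joint pmf of `(X₁,…,X_N, S)`: `S ~ Bern(θ)` and the `Xᵢ` are outputs of
independent BSC(`a₁`) channels with common input `S`. -/
noncomputable def pFull (N : ℕ) (θ a₁ : ℝ) : (Fin N → Bool) × Bool → ℝ :=
  fun z => pS θ z.2 * ∏ i, bsc a₁ z.2 (z.1 i)

/-- Joint pmf of `(X_k, X_j, S)`. -/
noncomputable def pPairS (N : ℕ) (θ a₁ : ℝ) (k j : Fin N) :
    (Fin 2 → Bool) × Bool → ℝ :=
  fun z => ∑ x : Fin N → Bool,
    if x k = z.1 0 ∧ x j = z.1 1 then pFull N θ a₁ (x, z.2) else 0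

/-!
For a coupling `W` making the coordinates conditionally independent,
`I(X; W) = H(X) - ∑ᵢ H(Xᵢ | W)`, so couplings are compared through their conditional
entropies; for the BSC mixture every `H(Xᵢ | S)` equals `H(X₁ | S)`. Restricting a coupling
`W` of `X` to two coordinates `(Xₖ, Xⱼ)` gives a coupling of the pair, so optimality of `S`
for that pair yields `H(Xₖ | W) + H(Xⱼ | W) ≤ 2 H(X₁ | S)`. Summing over the pairs
`(k, k + 1 mod N)` gives `∑ᵢ H(Xᵢ | W) ≤ N H(X₁ | S) = ∑ᵢ H(Xᵢ | S)`, i.e. `I(X; S) ≤ I(X; W)`.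
-/

open Finset Function

section MutualInfo

variable {A B : Type*}

noncomputable def fstMarginal [Fintype B] (q : A × B → ℝ) (a : A) : ℝ := ∑ b, q (a, b)

noncomputable def sndMarginal [Fintype A] (q : A × B → ℝ) (b : B) : ℝ := ∑ a, q (a, b)

noncomputable def mutualInfo [Fintype A] [Fintype B] (q : A × B → ℝ) : ℝ :=
  ent (fstMarginal q) + ent (sndMarginal q) - ent q

theorem ent_comp_equiv [Fintype A] [Fintype B] (p : A → ℝ) (e : B ≃ A) :
    ent (p ∘ e) = ent p :=
  congrArg Neg.neg (e.sum_comp fun a => p a * Real.log (p a))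

theorem fstMarginal_nonneg [Fintype B] {q : A × B → ℝ} (hq : ∀ z, 0 ≤ q z) (a : A) :
    0 ≤ fstMarginal q a :=
  sum_nonneg fun _ _ => hq _

theorem sndMarginal_nonneg [Fintype A] {q : A × B → ℝ} (hq : ∀ z, 0 ≤ q z) (b : B) :
    0 ≤ sndMarginal q b :=
  sum_nonneg fun _ _ => hq _

theorem le_fstMarginal [Fintype B] {q : A × B → ℝ} (hq : ∀ z, 0 ≤ q z) (a : A) (b : B) :
    q (a, b) ≤ fstMarginal q a :=
  single_le_sum (f := fun b => q (a, b)) (fun _ _ => hq _) (mem_univ b)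

theorem le_sndMarginal [Fintype A] {q : A × B → ℝ} (hq : ∀ z, 0 ≤ q z) (a : A) (b : B) :
    q (a, b) ≤ sndMarginal q b :=
  single_le_sum (f := fun a => q (a, b)) (fun _ _ => hq _) (mem_univ a)

theorem sum_fstMarginal [Fintype A] [Fintype B] (q : A × B → ℝ) :
    ∑ a, fstMarginal q a = ∑ z, q z :=
  (Fintype.sum_prod_type q).symm

theorem sum_sndMarginal [Fintype A] [Fintype B] (q : A × B → ℝ) :
    ∑ b, sndMarginal q b = ∑ z, q z :=
  (Fintype.sum_prod_type_right q).symm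

theorem sum_mul_fst [Fintype A] [Fintype B] (q : A × B → ℝ) (f : A → ℝ) :
    ∑ z, q z * f z.1 = ∑ a, fstMarginal q a * f a := by
  simp only [fstMarginal, Fintype.sum_prod_type, sum_mul]

theorem sum_mul_snd [Fintype A] [Fintype B] (q : A × B → ℝ) (f : B → ℝ) :
    ∑ z, q z * f z.2 = ∑ b, sndMarginal q b * f b := by
  simp only [sndMarginal, Fintype.sum_prod_type_right, sum_mul]

theorem mutualInfo_comp_equiv {B' : Type*} [Fintype A] [Fintype B] [Fintype B']
    (q : A × B → ℝ) (e : B' ≃ B) :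
    mutualInfo (fun z : A × B' => q (z.1, e z.2)) = mutualInfo q := by
  have hfst : fstMarginal (fun z : A × B' => q (z.1, e z.2)) = fstMarginal q :=
    funext fun a => e.sum_comp fun b => q (a, b)
  rw [mutualInfo, mutualInfo, hfst]
  rw [show sndMarginal (fun z : A × B' => q (z.1, e z.2)) = sndMarginal q ∘ e from rfl,
    ent_comp_equiv, show (fun z : A × B' => q (z.1, e z.2)) = q ∘ (Equiv.refl A).prodCongr e
      from rfl, ent_comp_equiv]

theorem mul_log_sub_mul_log_le {p r : ℝ} (hp : 0 ≤ p) (hr : 0 ≤ r) (hpr : 0 < p → 0 < r) :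
    p * Real.log r - p * Real.log p ≤ r - p := by
  rcases hp.eq_or_lt with rfl | hp
  · simpa using hr
  have hr := hpr hp
  calc p * Real.log r - p * Real.log p = p * Real.log (r / p) := by
        rw [Real.log_div hr.ne' hp.ne']; ring
    _ ≤ p * (r / p - 1) := by gcongr; exact Real.log_le_sub_one_of_pos (div_pos hr hp)
    _ = r - p := by field_simp

theorem mutualInfo_nonneg [Fintype A] [Fintype B] {q : A × B → ℝ} (hq : IsPMF q) :
    0 ≤ mutualInfo q := by
  obtain ⟨hq0, hq1⟩ := hq
  set r : A × B → ℝ := fun z => fstMarginal q z.1 * sndMarginal q z.2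
  have hr : ∀ z, 0 ≤ r z := fun z =>
    mul_nonneg (fstMarginal_nonneg hq0 _) (sndMarginal_nonneg hq0 _)
  have hpos : ∀ z, 0 < q z → 0 < r z := fun z hz =>
    mul_pos (hz.trans_le (le_fstMarginal hq0 _ _)) (hz.trans_le (le_sndMarginal hq0 _ _))
  have hsum_r : ∑ z, r z = ∑ z, q z := by
    rw [Fintype.sum_prod_type, ← sum_mul_sum, sum_fstMarginal, sum_sndMarginal, hq1, one_mul]
  have hlog_r : ∑ z, q z * Real.log (r z)
      = ∑ a, fstMarginal q a * Real.log (fstMarginal q a)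
        + ∑ b, sndMarginal q b * Real.log (sndMarginal q b) := by
    rw [← sum_mul_fst, ← sum_mul_snd, ← sum_add_distrib]
    refine sum_congr rfl fun z _ => ?_
    rcases (hq0 z).eq_or_lt with hz | hz
    · simp [← hz]
    · have := hpos z hz
      rw [Real.log_mul (left_ne_zero_of_mul this.ne') (right_ne_zero_of_mul this.ne'), mul_add]
  have hgibbs := sum_le_sum fun z (_ : z ∈ univ) => mul_log_sub_mul_log_le (hq0 z) (hr z) (hpos z)
  rw [sum_sub_distrib, sum_sub_distrib, hsum_r, hlog_r] at hgibbs
  simp only [mutualInfo, ent]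
  linarith

end MutualInfo

section Coordinates

variable {ι α W : Type*} [Fintype ι] [DecidableEq ι] [Fintype α] [DecidableEq α]

noncomputable def coordMarginal (q : (ι → α) × W → ℝ) (i : ι) (z : α × W) : ℝ :=
  ∑ x, if x i = z.1 then q (x, z.2) else 0

theorem sum_coordMarginal (q : (ι → α) × W → ℝ) (i : ι) (w : W) :
    ∑ b, coordMarginal q i (b, w) = sndMarginal q w := by
  simp only [coordMarginal, sndMarginal]
  rw [sum_comm]
  simp

theorem le_coordMarginal [Fintype W] {q : (ι → α) × W → ℝ} (hq : ∀ z, 0 ≤ q z) (i : ι)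
    (x : ι → α) (w : W) :
    q (x, w) ≤ coordMarginal q i (x i, w) := by
  simpa [coordMarginal] using single_le_sum (f := fun y => if y i = x i then q (y, w) else 0)
    (fun _ _ => by split_ifs <;> simp [hq]) (mem_univ x)

theorem coordMarginal_nonneg {q : (ι → α) × W → ℝ} (hq : ∀ z, 0 ≤ q z) (i : ι) (z : α × W) :
    0 ≤ coordMarginal q i z :=
  sum_nonneg fun x _ => by split_ifs <;> simp [hq]

theorem coordMarginal_le_sndMarginal {q : (ι → α) × W → ℝ} (hq : ∀ z, 0 ≤ q z) (i : ι) (b : α)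
    (w : W) : coordMarginal q i (b, w) ≤ sndMarginal q w :=
  sum_le_sum fun x _ => by dsimp only; split_ifs <;> simp [hq]

theorem sum_mul_coord [Fintype W] (q : (ι → α) × W → ℝ) (i : ι) (f : α × W → ℝ) :
    ∑ z, q z * f (z.1 i, z.2) = ∑ z, coordMarginal q i z * f z := by
  simp only [coordMarginal, Fintype.sum_prod_type_right, sum_mul, ite_mul, zero_mul]
  refine sum_congr rfl fun w _ => ?_
  rw [sum_comm]
  simp

theorem ent_eq_sum_sub_of_mul_pow_eq_prod [Fintype W] {q : (ι → α) × W → ℝ}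
    (hq : ∀ z, 0 ≤ q z) (e : ℕ)
    (hci : ∀ x w, q (x, w) * sndMarginal q w ^ e = ∏ i, coordMarginal q i (x i, w)) :
    ent q = ∑ i, ent (coordMarginal q i) - e * ent (sndMarginal q) := by
  have hlog : ∀ z : (ι → α) × W, q z * Real.log (q z)
      = ∑ i, q z * Real.log (coordMarginal q i (z.1 i, z.2))
        - e * (q z * Real.log (sndMarginal q z.2)) := by
    rintro ⟨x, w⟩
    rcases (hq (x, w)).eq_or_lt with hz | hz
    · simp [← hz]
    have hW := hz.trans_le (le_sndMarginal hq x w)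
    have hI := fun i => hz.trans_le (le_coordMarginal hq i x w)
    have := congrArg Real.log (hci x w)
    rw [Real.log_mul hz.ne' (pow_ne_zero _ hW.ne'), Real.log_pow,
      Real.log_prod fun i _ => (hI i).ne'] at this
    rw [← mul_sum, ← this]
    ring
  simp only [ent]
  rw [sum_congr rfl fun z _ => hlog z, sum_sub_distrib, sum_comm, ← mul_sum,
    sum_mul_snd q fun w => Real.log (sndMarginal q w),
    sum_congr rfl fun i _ => sum_mul_coord q i fun z => Real.log (coordMarginal q i z)]
  simp only [sum_neg_distrib]
  ring

end Coordinates

section WynerCoupling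

variable {ι α W : Type*} [Fintype ι] [DecidableEq ι] [Fintype α] [DecidableEq α] [Fintype W]

/-- `q(x | w) = ∏ᵢ q(xᵢ | w)`, with the denominators cleared. -/
def CondIndep (q : (ι → α) × W → ℝ) : Prop :=
  ∀ x w, q (x, w) * sndMarginal q w ^ (Fintype.card ι - 1) = ∏ i, coordMarginal q i (x i, w)

structure IsWynerCoupling (p : (ι → α) → ℝ) (q : (ι → α) × W → ℝ) : Prop where
  isPMF : IsPMF q
  fstMarginal_eq : fstMarginal q = p
  condIndep : CondIndep q

noncomputable def coordCondEnt (q : (ι → α) × W → ℝ) (i : ι) : ℝ :=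
  ent (coordMarginal q i) - ent (sndMarginal q)

theorem IsWynerCoupling.mutualInfo_eq [Nonempty ι] {p : (ι → α) → ℝ} {q : (ι → α) × W → ℝ}
    (hq : IsWynerCoupling p q) : mutualInfo q = ent p - ∑ i, coordCondEnt q i := by
  have hent := ent_eq_sum_sub_of_mul_pow_eq_prod hq.isPMF.1 _ hq.condIndep
  have hcard : ((Fintype.card ι - 1 : ℕ) : ℝ) = Fintype.card ι - 1 := by
    rw [Nat.cast_sub Fintype.card_pos, Nat.cast_one]
  rw [mutualInfo, hq.fstMarginal_eq, hent, hcard]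
  simp only [coordCondEnt, sum_sub_distrib, sum_const, card_univ, nsmul_eq_mul]
  ring

end WynerCoupling

section WynerCI

variable {ι α : Type} [Fintype ι] [DecidableEq ι] [Fintype α] [DecidableEq α]

theorem wynerCI_eq_sInf (p : (ι → α) → ℝ) :
    wynerCI p
      = sInf {r | ∃ n, ∃ q : (ι → α) × Fin n → ℝ, IsWynerCoupling p q ∧ r = mutualInfo q} := by
  unfold wynerCI
  congr 1
  ext r
  constructor
  · rintro ⟨n, q, hpmf, hmarg, hci, rfl⟩
    exact ⟨n, q, ⟨hpmf, funext hmarg, hci⟩, rfl⟩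
  · rintro ⟨n, q, ⟨hpmf, hmarg, hci⟩, rfl⟩
    exact ⟨n, q, hpmf, congrFun hmarg, hci, rfl⟩

theorem IsWynerCoupling.comp_equiv {W W' : Type*} [Fintype W] [Fintype W'] {p : (ι → α) → ℝ}
    {q : (ι → α) × W → ℝ} (hq : IsWynerCoupling p q) (e : W' ≃ W) :
    IsWynerCoupling p fun z => q (z.1, e z.2) where
  isPMF := ⟨fun _ => hq.isPMF.1 _, ((Equiv.refl _).prodCongr e).sum_comp q ▸ hq.isPMF.2⟩
  fstMarginal_eq :=
    funext fun x => (e.sum_comp fun w => q (x, w)).trans (congrFun hq.fstMarginal_eq x)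
  condIndep x w := hq.condIndep x (e w)

theorem IsWynerCoupling.exists_fin {W : Type*} [Fintype W] {p : (ι → α) → ℝ}
    {q : (ι → α) × W → ℝ} (hq : IsWynerCoupling p q) :
    ∃ n, ∃ q' : (ι → α) × Fin n → ℝ, IsWynerCoupling p q' ∧ mutualInfo q = mutualInfo q' :=
  ⟨_, _, hq.comp_equiv (Fintype.equivFin W).symm, (mutualInfo_comp_equiv q _).symm⟩

theorem IsWynerCoupling.wynerCI_le {W : Type*} [Fintype W] {p : (ι → α) → ℝ}
    {q : (ι → α) × W → ℝ} (hq : IsWynerCoupling p q) : wynerCI p ≤ mutualInfo q := by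
  rw [wynerCI_eq_sInf]
  refine csInf_le ⟨0, ?_⟩ hq.exists_fin
  rintro r ⟨n, q', hq', rfl⟩
  exact mutualInfo_nonneg hq'.isPMF

theorem wynerCI_eq_of_forall_le {W : Type*} [Fintype W] {p : (ι → α) → ℝ}
    {q₀ : (ι → α) × W → ℝ} (hq₀ : IsWynerCoupling p q₀)
    (h : ∀ n (q : (ι → α) × Fin n → ℝ), IsWynerCoupling p q → mutualInfo q₀ ≤ mutualInfo q) :
    wynerCI p = mutualInfo q₀ := by
  refine hq₀.wynerCI_le.antisymm ?_
  rw [wynerCI_eq_sInf]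
  refine le_csInf ⟨_, hq₀.exists_fin⟩ ?_
  rintro r ⟨n, q, hq, rfl⟩
  exact h n q hq

end WynerCI

section CompMarginal

variable {ι κ α W : Type*} [Fintype ι] [DecidableEq ι] [Fintype κ] [Fintype α] [DecidableEq α]

theorem sum_ite_comp_eq_prod_mul_prod {σ : κ → ι} (hσ : Injective σ) (g : ι → α → ℝ)
    (y : κ → α) :
    ∑ x : ι → α, (if x ∘ σ = y then ∏ i, g i (x i) else 0)
      = (∏ t, g (σ t) (y t)) * ∏ i ∈ (univ.image σ)ᶜ, ∑ b, g i b := by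
  set g' : ι → α → ℝ := fun i b => if ∀ t, σ t = i → b = y t then g i b else 0
  have hfactor : ∀ x : ι → α, (if x ∘ σ = y then ∏ i, g i (x i) else 0) = ∏ i, g' i (x i) := by
    intro x
    rw [Fintype.prod_ite_zero]
    refine if_congr ⟨?_, ?_⟩ rfl rfl
    · rintro rfl i t rfl; rfl
    · exact fun hx => funext fun t => hx (σ t) t rfl
  have himage : ∀ t, ∑ b, g' (σ t) b = g (σ t) (y t) := by
    intro t
    simp [g', hσ.eq_iff]
  have hcompl : ∀ i ∉ univ.image σ, ∑ b, g' i b = ∑ b, g i b := by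
    intro i hi
    simp only [mem_image, mem_univ, true_and, not_exists] at hi
    simp [g', hi]
  rw [sum_congr rfl fun x _ => hfactor x, ← Fintype.prod_sum,
    ← prod_mul_prod_compl (univ.image σ), prod_image fun a _ b _ hab => hσ hab,
    prod_congr rfl fun t _ => himage t]
  congr 1
  exact prod_congr rfl fun i hi => hcompl i (mem_compl.mp hi)

noncomputable def compMarginal (q : (ι → α) × W → ℝ) (σ : κ → ι) (z : (κ → α) × W) : ℝ :=
  ∑ x, if x ∘ σ = z.1 then q (x, z.2) else 0

theorem compMarginal_nonneg {q : (ι → α) × W → ℝ} (hq : ∀ z, 0 ≤ q z) (σ : κ → ι)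
    (z : (κ → α) × W) : 0 ≤ compMarginal q σ z :=
  sum_nonneg fun x _ => by split_ifs <;> simp [hq]

theorem sndMarginal_compMarginal [DecidableEq κ] (q : (ι → α) × W → ℝ) (σ : κ → ι) :
    sndMarginal (compMarginal q σ) = sndMarginal q := by
  funext w
  simp only [sndMarginal, compMarginal]
  rw [sum_comm]
  simp

theorem coordMarginal_compMarginal [DecidableEq κ] (q : (ι → α) × W → ℝ) (σ : κ → ι) (t : κ) :
    coordMarginal (compMarginal q σ) t = coordMarginal q (σ t) := by
  funext ⟨b, w⟩
  have hswap : ∀ y : κ → α, (if y t = b then ∑ x, (if x ∘ σ = y then q (x, w) else 0) else 0)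
      = ∑ x, if x ∘ σ = y then (if y t = b then q (x, w) else 0) else 0 := fun y => by
    split_ifs <;> simp
  simp only [coordMarginal, compMarginal, hswap]
  rw [sum_comm]
  simp

theorem fstMarginal_compMarginal [Fintype W] (q : (ι → α) × W → ℝ) (σ : κ → ι) :
    fstMarginal (compMarginal q σ) = fun y => ∑ x, if x ∘ σ = y then fstMarginal q x else 0 := by
  funext y
  simp only [fstMarginal, compMarginal]
  rw [sum_comm]
  simp only [sum_ite_irrel, sum_const_zero]

theorem condIndep_compMarginal [DecidableEq κ] [Nonempty κ] [Fintype W]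
    {q : (ι → α) × W → ℝ} (hq : ∀ z, 0 ≤ q z) (hci : CondIndep q) {σ : κ → ι}
    (hσ : Injective σ) : CondIndep (compMarginal q σ) := by
  intro y w
  rw [sndMarginal_compMarginal]
  simp only [coordMarginal_compMarginal]
  set M := sndMarginal q w
  have hmarg : compMarginal q σ (y, w) * M ^ (Fintype.card ι - 1)
      = (∏ t, coordMarginal q (σ t) (y t, w)) * M ^ (Fintype.card ι - Fintype.card κ) :=
    calc compMarginal q σ (y, w) * M ^ (Fintype.card ι - 1)
        = ∑ x, if x ∘ σ = y then ∏ i, coordMarginal q i (x i, w) else 0 := by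
          rw [compMarginal, sum_mul]
          refine sum_congr rfl fun x _ => ?_
          split_ifs
          · exact hci x w
          · simp
      _ = (∏ t, coordMarginal q (σ t) (y t, w))
            * ∏ i ∈ (univ.image σ)ᶜ, ∑ b, coordMarginal q i (b, w) :=
          sum_ite_comp_eq_prod_mul_prod hσ (fun i b => coordMarginal q i (b, w)) y
      _ = (∏ t, coordMarginal q (σ t) (y t, w)) * M ^ (Fintype.card ι - Fintype.card κ) := by
          rw [prod_congr rfl fun i _ => sum_coordMarginal q i w, prod_const, card_compl,
            card_image_of_injective _ hσ, card_univ]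
  rcases (sndMarginal_nonneg hq w).eq_or_lt with hM | hM
  · obtain ⟨t₀⟩ := ‹Nonempty κ›
    have hcomp : compMarginal q σ (y, w) = 0 := by
      refine le_antisymm ?_ (compMarginal_nonneg hq σ _)
      simpa [← hM, sndMarginal_compMarginal] using
        le_sndMarginal (compMarginal_nonneg hq σ) y w
    have hcoord : coordMarginal q (σ t₀) (y t₀, w) = 0 :=
      le_antisymm (hM ▸ coordMarginal_le_sndMarginal hq _ _ _) (coordMarginal_nonneg hq _ _)
    rw [hcomp, zero_mul, prod_eq_zero (mem_univ t₀) hcoord]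
  · have hk : 1 ≤ Fintype.card κ := Fintype.card_pos
    have hkι := Fintype.card_le_of_injective σ hσ
    refine mul_right_cancel₀ (pow_ne_zero (Fintype.card ι - Fintype.card κ) hM.ne') ?_
    rw [mul_assoc, ← pow_add, ← hmarg]
    congr 2
    omega

theorem coordCondEnt_compMarginal [DecidableEq κ] [Fintype W] (q : (ι → α) × W → ℝ)
    (σ : κ → ι) (t : κ) : coordCondEnt (compMarginal q σ) t = coordCondEnt q (σ t) := by
  rw [coordCondEnt, coordCondEnt, coordMarginal_compMarginal, sndMarginal_compMarginal]

theorem IsWynerCoupling.comp [DecidableEq κ] [Nonempty κ] [Fintype W] {p : (ι → α) → ℝ}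
    {q : (ι → α) × W → ℝ} (hq : IsWynerCoupling p q) {σ : κ → ι} (hσ : Injective σ) :
    IsWynerCoupling (fun y => ∑ x, if x ∘ σ = y then p x else 0) (compMarginal q σ) where
  isPMF := ⟨compMarginal_nonneg hq.isPMF.1 σ, by
    rw [← sum_sndMarginal, sndMarginal_compMarginal, sum_sndMarginal, hq.isPMF.2]⟩
  fstMarginal_eq := by rw [fstMarginal_compMarginal, hq.fstMarginal_eq]
  condIndep := condIndep_compMarginal hq.isPMF.1 hq.condIndep hσ

end CompMarginal

theorem IsWynerCoupling.sum_coordCondEnt_le {ι κ α : Type} [Fintype ι] [DecidableEq ι]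
    [Fintype κ] [DecidableEq κ] [Nonempty κ] [Fintype α] [DecidableEq α]
    {W₀ W : Type*} [Fintype W₀] [Fintype W] {p : (ι → α) → ℝ} {q₀ : (ι → α) × W₀ → ℝ}
    {q : (ι → α) × W → ℝ} (hq₀ : IsWynerCoupling p q₀) (hq : IsWynerCoupling p q) {σ : κ → ι}
    (hσ : Injective σ)
    (hopt : wynerCI (fstMarginal (compMarginal q₀ σ)) = mutualInfo (compMarginal q₀ σ)) :
    ∑ t, coordCondEnt q (σ t) ≤ ∑ t, coordCondEnt q₀ (σ t) := by
  have hle := (hq.comp hσ).wynerCI_le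
  rw [← (hq₀.comp hσ).fstMarginal_eq, hopt, (hq₀.comp hσ).mutualInfo_eq,
    (hq.comp hσ).mutualInfo_eq] at hle
  simp only [coordCondEnt_compMarginal] at hle
  linarith

theorem sum_le_mul_of_add_le_two_mul {N : ℕ} (hN : 2 ≤ N) {u : Fin N → ℝ} {c : ℝ}
    (h : ∀ k j, k ≠ j → u k + u j ≤ 2 * c) : ∑ i, u i ≤ N * c := by
  have hrot : ∀ k, finRotate N k ≠ k := fun k =>
    Equiv.Perm.mem_support.mp (by rw [support_finRotate_of_le hN]; exact mem_univ k)
  have hsum := sum_le_sum fun k (_ : k ∈ univ) => h k (finRotate N k) (hrot k).symm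
  rw [sum_add_distrib, Equiv.sum_comp, sum_const, card_univ, Fintype.card_fin, nsmul_eq_mul]
    at hsum
  linarith

section Mixture

variable {ι α W : Type*} [Fintype ι] [DecidableEq ι] [Fintype α]

noncomputable def mixture (π : W → ℝ) (K : W → α → ℝ) (z : (ι → α) × W) : ℝ :=
  π z.2 * ∏ i, K z.2 (z.1 i)

variable {π : W → ℝ} {K : W → α → ℝ}

theorem sndMarginal_mixture (hK : ∀ w, ∑ a, K w a = 1) :
    sndMarginal (mixture (ι := ι) π K) = π := by
  funext w
  simp [sndMarginal, mixture, ← mul_sum, ← Fintype.prod_sum, hK]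

theorem coordMarginal_mixture [DecidableEq α] (hK : ∀ w, ∑ a, K w a = 1) (i : ι) :
    coordMarginal (mixture π K) i = fun z => π z.2 * K z.2 z.1 := by
  funext ⟨b, w⟩
  have hpoint : ∀ x : ι → α, (if x i = b then mixture π K (x, w) else 0)
      = π w * if x ∘ (fun _ : Unit => i) = fun _ => b then ∏ j, K w (x j) else 0 := by
    intro x
    simp [mixture, funext_iff]
  simp only [coordMarginal, hpoint, ← mul_sum,
    sum_ite_comp_eq_prod_mul_prod (injective_of_subsingleton _), hK]
  simp

theorem condIndep_mixture [DecidableEq α] [Nonempty ι] (hK : ∀ w, ∑ a, K w a = 1) :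
    CondIndep (mixture (ι := ι) π K) := by
  intro x w
  simp only [sndMarginal_mixture hK, coordMarginal_mixture hK, mixture, prod_mul_distrib,
    prod_const, card_univ]
  rw [mul_right_comm, ← pow_succ', Nat.sub_add_cancel Fintype.card_pos, mul_comm]

theorem isWynerCoupling_mixture [DecidableEq α] [Fintype W] [Nonempty ι] (hπ : IsPMF π)
    (hK : ∀ w, IsPMF (K w)) :
    IsWynerCoupling (fstMarginal (mixture (ι := ι) π K)) (mixture π K) where
  isPMF := ⟨fun z => mul_nonneg (hπ.1 _) (prod_nonneg fun _ _ => (hK _).1 _), by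
    rw [← sum_sndMarginal, sndMarginal_mixture fun w => (hK w).2, hπ.2]⟩
  fstMarginal_eq := rfl
  condIndep := condIndep_mixture fun w => (hK w).2

theorem coordCondEnt_mixture [DecidableEq α] [Fintype W] (hK : ∀ w, ∑ a, K w a = 1) (i : ι) :
    coordCondEnt (mixture π K) i = ent (fun z : α × W => π z.2 * K z.2 z.1) - ent π := by
  rw [coordCondEnt, coordMarginal_mixture hK, sndMarginal_mixture hK]

end Mixture

theorem isPMF_pS {θ : ℝ} (hθ0 : 0 ≤ θ) (hθ1 : θ ≤ 1) : IsPMF (pS θ) :=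
  ⟨fun s => by cases s <;> simp [pS] <;> linarith, by simp [pS]⟩

theorem isPMF_bsc {a : ℝ} (ha0 : 0 ≤ a) (ha1 : a ≤ 1) (s : Bool) : IsPMF (bsc a s) :=
  ⟨fun x => by unfold bsc; split_ifs <;> linarith, by cases s <;> simp [bsc]⟩

theorem pPairS_eq_compMarginal (N : ℕ) (θ a₁ : ℝ) (k j : Fin N) :
    pPairS N θ a₁ k j = compMarginal (pFull N θ a₁) ![k, j] := by
  funext z
  refine sum_congr rfl fun x _ => if_congr ?_ rfl rfl
  simp [funext_iff, Fin.forall_fin_two]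

/-- If `S` achieves the common information of every pair, i.e.
`C(X_k, X_j) = I(X_k, X_j; S)` for all `k ≠ j`, then
`C(X₁,…,X_N) = I(X₁,…,X_N; S)` for the BSC-mixture source. -/
theorem bsc_mixture_common_information (N : ℕ) (θ a₁ : ℝ)
    (hθ0 : 0 ≤ θ) (hθ1 : θ ≤ 1) (ha0 : 0 ≤ a₁) (ha1 : a₁ ≤ 1 / 2) (hN : 2 ≤ N)
    (hpair : ∀ k j : Fin N, k ≠ j →
      wynerCI (fun v : Fin 2 → Bool => ∑ s, pPairS N θ a₁ k j (v, s))
        = ent (fun v : Fin 2 → Bool => ∑ s, pPairS N θ a₁ k j (v, s))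
          + ent (fun s => ∑ v : Fin 2 → Bool, pPairS N θ a₁ k j (v, s))
          - ent (pPairS N θ a₁ k j)) :
    wynerCI (fun x : Fin N → Bool => ∑ s, pFull N θ a₁ (x, s))
      = ent (fun x : Fin N → Bool => ∑ s, pFull N θ a₁ (x, s))
        + ent (fun s => ∑ x : Fin N → Bool, pFull N θ a₁ (x, s))
        - ent (pFull N θ a₁) := by
  have : Nonempty (Fin N) := ⟨⟨0, by omega⟩⟩
  have hK : ∀ s, IsPMF (bsc a₁ s) := isPMF_bsc ha0 (by linarith)
  have hS : IsWynerCoupling (fstMarginal (pFull N θ a₁)) (pFull N θ a₁) :=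
    isWynerCoupling_mixture (isPMF_pS hθ0 hθ1) hK
  refine wynerCI_eq_of_forall_le hS fun n q (hq : IsWynerCoupling (fstMarginal _) q) => ?_
  set c := ent (fun z : Bool × Bool => pS θ z.2 * bsc a₁ z.2 z.1) - ent (pS θ)
  have hS_cond : ∀ i, coordCondEnt (pFull N θ a₁) i = c :=
    coordCondEnt_mixture fun s => (hK s).2
  have hpairs : ∀ k j, k ≠ j → coordCondEnt q k + coordCondEnt q j ≤ 2 * c := by
    intro k j hkj
    have hopt := hpair k j hkj
    rw [pPairS_eq_compMarginal] at hopt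
    simpa [hS_cond, two_mul] using
      hS.sum_coordCondEnt_le hq (injective_pair_iff_ne.mpr hkj) hopt
  rw [hS.mutualInfo_eq, hq.mutualInfo_eq]
  simp only [hS_cond, sum_const, card_univ, Fintype.card_fin, nsmul_eq_mul]
  linarith [sum_le_mul_of_add_le_two_mul hN hpairs]
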